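/- Let p be an LTP agent in a signed digraph with m > 1 stubborn agents satisfying the reachability assumption, and suppose all incoming edges at each node in N_p are cooperative (have positive weight). Then under the signed Friedkin-Johnsen model, the steady-state opinions satisfy x*_p = x*_q for every q ∈ N_p, for every initial opinion vector x(0). -/

import Mathlib

/-- `l` is a directed path (a walk without repeated nodes) from `s` to `t` in the
digraph with edge relation `E`. -/
def IsPathList {V : Type*} (E : V → V → Prop) (s t : V) (l : List V) : Prop :=
  l.Chain' E ∧ l.head? = some s ∧ l.getLast? = some t ∧ l.Nodup

/-- `q` is persuaded by `p`: `q` is a non-stubborn node distinct from `p` such that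
every directed path from every stubborn node to `q` traverses `p`. -/
def Persuaded {V : Type*} (E : V → V → Prop) (S : Set V) (p q : V) : Prop :=
  q ∉ S ∧ q ≠ p ∧ ∀ s ∈ S, ∀ l : List V, IsPathList E s q l → p ∈ l

/-- `p` is a Locally Topologically Persuasive (LTP) agent: some non-stubborn node is
persuaded by `p`, and if `p` is non-stubborn then there is no node `c ≠ p` through
which every path from stubborn nodes to `p` passes. -/
def IsLTP {V : Type*} (E : V → V → Prop) (S : Set V) (p : V) : Prop :=
  (∃ q, Persuaded E S p q) ∧
  (p ∉ S → ¬ ∃ c, c ≠ p ∧ ∀ s ∈ S, ∀ l : List V, IsPathList E s p l → c ∈ l)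

/-
At a node `q ∈ N_p` nobody is stubborn, so the steady state satisfies `x*_q = ∑ⱼ W q j x*_j`,
and cooperativity makes this a convex combination of the in-neighbours of `q`. Every
in-neighbour of `q` is either `p` or again in `N_p`, so `x*` obeys a maximum principle on
`{p} ∪ N_p`: if the maximum were not attained at `p`, the set of maximisers inside `N_p`
would contain all in-neighbours of its members, yet a path from a stubborn agent enters it
through an edge from outside. Hence `max = x*_p`, likewise `min = x*_p`, and `x*` is
constant on `{p} ∪ N_p`.
-/

open Matrix

section Paths

variable {V : Type*} {E : V → V → Prop} {s t v : V} {l : List V}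

lemma IsPathList.singleton (v : V) : IsPathList E v v [v] :=
  ⟨List.isChain_singleton v, rfl, rfl, List.nodup_singleton v⟩

lemma IsPathList.concat (h : IsPathList E s t l) (htv : E t v) (hv : v ∉ l) :
    IsPathList E s v (l ++ [v]) := by
  obtain ⟨hc, hh, hlast, hnd⟩ := h
  have hl : l ≠ [] := by rintro rfl; simp at hh
  refine ⟨List.isChain_append.2 ⟨hc, List.isChain_singleton _, ?_⟩, ?_, List.getLast?_concat, ?_⟩
  · simp_all
  · simp [List.head?_append, hh]
  · simpa [List.nodup_append, hnd] using fun a ha => ne_of_mem_of_not_mem ha hv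

lemma IsPathList.exists_prefix (h : IsPathList E s t l) (hv : v ∈ l) :
    ∃ l', l' <+: l ∧ IsPathList E s v l' := by
  obtain ⟨l₁, l₂, rfl⟩ := List.append_of_mem hv
  obtain ⟨hc, hh, -, hnd⟩ := h
  have hpre : l₁ ++ [v] <+: l₁ ++ v :: l₂ := ⟨l₂, by simp⟩
  refine ⟨_, hpre, hc.prefix hpre, ?_, List.getLast?_concat, hnd.sublist hpre.sublist⟩
  simpa [List.head?_append] using hh

lemma IsPathList.backwards_induction (P : V → Prop) (h : IsPathList E s t l)
    (carries : ∀ ⦃a b⦄, E a b → P b → P a) (final : P t) : P s := by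
  obtain ⟨hc, hh, hlast, -⟩ := h
  have hl : l ≠ [] := by rintro rfl; simp at hh
  refine hc.backwards_induction P l carries (fun _ => ?_) s (List.mem_of_mem_head? hh)
  rwa [← Option.some_inj.1 ((List.getLast?_eq_some_getLast _).symm.trans hlast)] at final

end Paths

section Persuasion

variable {V : Type*} {E : V → V → Prop} {S : Set V} {p q j : V}

lemma Persuaded.mem_of_isPathList_of_adj (hq : Persuaded E S p q) (hj : E j q) {s : V}
    (hs : s ∈ S) {l : List V} (hl : IsPathList E s j l) : p ∈ l := by
  by_cases hql : q ∈ l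
  · obtain ⟨l', hpre, hl'⟩ := hl.exists_prefix hql
    exact hpre.subset (hq.2.2 s hs l' hl')
  · simpa [hq.2.1.symm] using hq.2.2 s hs _ (hl.concat hj hql)

lemma Persuaded.eq_or_persuaded_of_adj (hq : Persuaded E S p q) (hj : E j q) :
    j = p ∨ Persuaded E S p j := by
  refine or_iff_not_imp_left.2 fun hjp => ⟨fun hjS => hjp ?_, hjp,
    fun s hs l hl => hq.mem_of_isPathList_of_adj hj hs hl⟩
  simpa [eq_comm] using hq.mem_of_isPathList_of_adj hj hjS (IsPathList.singleton j)

end Persuasion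

lemma eq_of_sum_mul_eq_of_le {ι : Type*} [Fintype ι] {w x : ι → ℝ} {C : ℝ}
    (hw : ∀ j, 0 ≤ w j) (hw1 : ∑ j, w j = 1) (hle : ∀ j, w j ≠ 0 → x j ≤ C)
    (hsum : ∑ j, w j * x j = C) {j : ι} (hj : w j ≠ 0) : x j = C := by
  have hgap : ∑ i, w i * (C - x i) = 0 := by
    simp only [mul_sub, Finset.sum_sub_distrib, ← Finset.sum_mul, hw1, hsum, one_mul, sub_self]
  have hnonneg : ∀ i ∈ Finset.univ, 0 ≤ w i * (C - x i) := fun i _ => by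
    by_cases hi : w i = 0
    · simp [hi]
    · exact mul_nonneg (hw i) (sub_nonneg.2 (hle i hi))
  have := (Finset.sum_eq_zero_iff_of_nonneg hnonneg).1 hgap j (Finset.mem_univ j)
  linarith [(mul_eq_zero.1 this).resolve_left hj]

section MaximumPrinciple

variable {V : Type*} [Fintype V] {W : Matrix V V ℝ} {E : V → V → Prop} {S : Set V} {p : V}

theorem Persuaded.le_of_harmonic (hE : ∀ i j, E j i ↔ W i j ≠ 0)
    (hcoop : ∀ q, Persuaded E S p q → ∀ j, 0 ≤ W q j)
    (hrow : ∀ q, Persuaded E S p q → ∑ j, W q j = 1)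
    (hreach : ∀ v, v ∉ S → ∃ s ∈ S, ∃ l : List V, IsPathList E s v l)
    {x : V → ℝ} (hx : ∀ q, Persuaded E S p q → x q = (W *ᵥ x) q)
    {q : V} (hq : Persuaded E S p q) : x q ≤ x p := by
  classical
  set T := Finset.univ.filter fun v => v = p ∨ Persuaded E S p v
  have hmemT : ∀ {v}, v ∈ T ↔ v = p ∨ Persuaded E S p v := by simp [T]
  obtain ⟨q₀, hq₀T, hmax⟩ := T.exists_max_image x ⟨p, hmemT.2 (Or.inl rfl)⟩
  refine (hmax q (hmemT.2 (Or.inr hq))).trans (le_of_eq ?_)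
  by_contra hne
  have hq₀ : Persuaded E S p q₀ := (hmemT.1 hq₀T).resolve_left fun h => hne (h ▸ rfl)
  have carries : ∀ ⦃a b⦄, E a b → b ∈ T ∧ x b = x q₀ → a ∈ T ∧ x a = x q₀ := by
    rintro a b hab ⟨hbT, hb⟩
    have hbp : Persuaded E S p b := (hmemT.1 hbT).resolve_left fun h => hne (h ▸ hb.symm)
    have hT : ∀ j, W b j ≠ 0 → j ∈ T := fun j hj =>
      hmemT.2 (hbp.eq_or_persuaded_of_adj ((hE b j).2 hj))
    refine ⟨hT a ((hE b a).1 hab), eq_of_sum_mul_eq_of_le (hcoop b hbp) (hrow b hbp)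
      (fun j hj => hmax j (hT j hj)) ?_ ((hE b a).1 hab)⟩
    rw [← hb, hx b hbp]
    rfl
  obtain ⟨s, hs, l, hl⟩ := hreach q₀ hq₀.1
  obtain ⟨hsT, hsx⟩ := hl.backwards_induction _ carries ⟨hq₀T, rfl⟩
  have hsp : s = p := (hmemT.1 hsT).resolve_right fun h => h.1 hs
  exact hne (hsp ▸ hsx).symm

theorem Persuaded.eq_of_harmonic (hE : ∀ i j, E j i ↔ W i j ≠ 0)
    (hcoop : ∀ q, Persuaded E S p q → ∀ j, 0 ≤ W q j)
    (hrow : ∀ q, Persuaded E S p q → ∑ j, W q j = 1)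
    (hreach : ∀ v, v ∉ S → ∃ s ∈ S, ∃ l : List V, IsPathList E s v l)
    {x : V → ℝ} (hx : ∀ q, Persuaded E S p q → x q = (W *ᵥ x) q)
    {q : V} (hq : Persuaded E S p q) : x p = x q := by
  have hx' : ∀ r, Persuaded E S p r → (-x) r = (W *ᵥ -x) r := fun r hr => by
    rw [mulVec_neg, Pi.neg_apply, Pi.neg_apply, hx r hr]
  refine le_antisymm ?_ (Persuaded.le_of_harmonic hE hcoop hrow hreach hx hq)
  simpa using Persuaded.le_of_harmonic hE hcoop hrow hreach hx' hq

end MaximumPrinciple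

noncomputable def fjSteadyState {ι : Type*} [Fintype ι] [DecidableEq ι]
    (W : Matrix ι ι ℝ) (β x₀ : ι → ℝ) : ι → ℝ :=
  ((1 - (1 - diagonal β) * W)⁻¹ * diagonal β) *ᵥ x₀

/-- Holds also when `I - (I - β) W` is singular: the junk inverse `0` gives `x* = 0`. -/
lemma fjSteadyState_apply_of_eq_zero {ι : Type*} [Fintype ι] [DecidableEq ι]
    (W : Matrix ι ι ℝ) (β x₀ : ι → ℝ) {r : ι} (hr : β r = 0) :
    fjSteadyState W β x₀ r = (W *ᵥ fjSteadyState W β x₀) r := by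
  by_cases hdet : IsUnit (1 - (1 - diagonal β) * W).det
  · have hfix : (1 - (1 - diagonal β) * W) *ᵥ fjSteadyState W β x₀ = diagonal β *ᵥ x₀ := by
      rw [fjSteadyState, mulVec_mulVec, mul_nonsing_inv_cancel_left _ _ hdet]
    have := congrFun hfix r
    simp only [sub_mulVec, one_mulVec, ← mulVec_mulVec, Pi.sub_apply, mulVec_diagonal, hr] at this
    linarith
  · simp [fjSteadyState, nonsing_inv_apply_not_isUnit _ hdet]

theorem LTP_opinion_cluster_general {n : ℕ}
    (W : Matrix (Fin n) (Fin n) ℝ) (β : Fin n → ℝ) (E : Fin n → Fin n → Prop)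
    (S : Set (Fin n))
    (hE : ∀ i j, E j i ↔ W i j ≠ 0)
    (hS : ∀ i, i ∈ S ↔ 0 < β i)
    (hβ : ∀ i, β i ∈ Set.Icc (0 : ℝ) 1)
    (hW : ∀ i, ∑ j, |W i j| = 1)
    (hreach : ∀ v, v ∉ S → ∃ s ∈ S, ∃ l : List (Fin n), IsPathList E s v l)
    (p : Fin n)
    (hcoop : ∀ q, Persuaded E S p q → ∀ j, 0 ≤ W q j) :
    ∀ x0 : Fin n → ℝ, ∀ q, Persuaded E S p q →
      (((1 - (1 - Matrix.diagonal β) * W)⁻¹ * Matrix.diagonal β).mulVec x0) p =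
      (((1 - (1 - Matrix.diagonal β) * W)⁻¹ * Matrix.diagonal β).mulVec x0) q := by
  intro x0 q hq
  change fjSteadyState W β x0 p = fjSteadyState W β x0 q
  have hβ0 : ∀ r, Persuaded E S p r → β r = 0 := fun r hr =>
    le_antisymm (not_lt.1 fun h => hr.1 ((hS r).2 h)) (hβ r).1
  have hrow : ∀ r, Persuaded E S p r → ∑ j, W r j = 1 := fun r hr => by
    simpa only [abs_of_nonneg (hcoop r hr _)] using hW r
  exact Persuaded.eq_of_harmonic hE hcoop hrow hreach
    (fun r hr => fjSteadyState_apply_of_eq_zero W β x0 (hβ0 r hr)) hq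

/-- If `p` is an LTP agent of a signed digraph with more than one stubborn agent,
every non-stubborn agent has a path from a stubborn one, and all incoming edges
at each node of `N_p` are cooperative, then under the signed Friedkin-Johnsen
model the steady-state opinions of `p` and of every `q ∈ N_p` coincide, for
every initial opinion vector. -/
theorem LTP_opinion_cluster {n : ℕ}
    (W : Matrix (Fin n) (Fin n) ℝ) (β : Fin n → ℝ) (E : Fin n → Fin n → Prop)
    (S : Set (Fin n))
    (hE : ∀ i j, E j i ↔ W i j ≠ 0)
    (hS : ∀ i, i ∈ S ↔ 0 < β i)
    (hβ : ∀ i, β i ∈ Set.Icc (0 : ℝ) 1)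
    (hW : ∀ i, ∑ j, |W i j| = 1)
    (hm : 1 < Nat.card S)
    (hreach : ∀ v, v ∉ S → ∃ s ∈ S, ∃ l : List (Fin n), IsPathList E s v l)
    (p : Fin n) (hp : IsLTP E S p)
    (hcoop : ∀ q, Persuaded E S p q → ∀ j, 0 ≤ W q j) :
    ∀ x0 : Fin n → ℝ, ∀ q, Persuaded E S p q →
      (((1 - (1 - Matrix.diagonal β) * W)⁻¹ * Matrix.diagonal β).mulVec x0) p =
      (((1 - (1 - Matrix.diagonal β) * W)⁻¹ * Matrix.diagonal β).mulVec x0) q :=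
  LTP_opinion_cluster_general W β E S hE hS hβ hW hreach p hcoop
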